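/- arXiv:hep-th/0605185 — 3 statements merged into one kernel-verified Lean document; each statement's English description precedes it below -/
import Mathlib

section
/- Let N ≥ 1 and μ ∈ ℂ with Im μ ≠ 0. Let R, R_t, R_x, R_y, j_t, j_x, j_y ∈ M_N(ℂ) satisfy: R* = R, R² = R; R_a* = R_a and R_a R + R R_a = R_a for each a ∈ {t,x,y}; and j_a* = −j_a for each a ∈ {t,x,y}. Define B = (μ R_x − R_y + R j_y)(1 − R) and C = μ⁻¹(μ R_y + R_x − R j_x)(1 − R), and assume the Bäcklund relations R(R_t − j_t(1 − R)) = B and R R_t = C hold. Then the following three trace identities hold: Tr(R_t R_t R) = Tr(C C*), Tr(j_t R_t) = Tr(C B* − B C*), and Tr(R j_t R_t) = Tr((C − B) C*). -/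
/-! The Bäcklund relations give `C = R Rₜ` and `B = R (Rₜ - jₜ (1 - R))`. Differentiating `R² = R`
forces `R Rₜ R = 0`, so `C B* - B C*` and `(C - B) C*` collapse to `R (Rₜ jₜ + jₜ Rₜ) R` and
`R jₜ Rₜ R`; cyclicity of the trace and `R² = R` then remove the outer factors of `R`. -/

open Matrix

theorem IsIdempotentElem.mul_mul_eq_zero_of_mul_add_mul_eq {α : Type*} [NonUnitalRing α]
    {P D : α} (hP : IsIdempotentElem P) (hD : D * P + P * D = D) : P * D * P = 0 := by
  have h : P * (D * P + P * D) = P * D := by rw [hD]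
  rwa [mul_add, ← mul_assoc, ← mul_assoc, hP.eq, add_eq_right] at h

section Backlund

variable {α : Type*} [Ring α] [StarRing α] {P D j B C : α}

theorem sub_mul_star_eq_of_backlund (hP : IsSelfAdjoint P) (hD : IsSelfAdjoint D)
    (hPDP : P * D * P = 0) (hB : P * (D - j * (1 - P)) = B) (hC : P * D = C) :
    (C - B) * star C = P * j * D * P := by
  subst hB hC
  rw [star_mul, hP.star_eq, hD.star_eq]
  calc (P * D - P * (D - j * (1 - P))) * (D * P) = P * j * D * P - P * j * (P * D * P) := by
        noncomm_ring
    _ = P * j * D * P := by rw [hPDP, mul_zero, sub_zero]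

theorem mul_star_sub_mul_star_eq_of_backlund (hP : IsSelfAdjoint P) (hD : IsSelfAdjoint D)
    (hj : star j = -j) (hPDP : P * D * P = 0) (hB : P * (D - j * (1 - P)) = B)
    (hC : P * D = C) :
    C * star B - B * star C = P * D * j * P + P * j * D * P := by
  subst hB hC
  simp only [star_mul, star_sub, star_one, hP.star_eq, hD.star_eq, hj]
  calc P * D * ((D - (1 - P) * -j) * P) - P * (D - j * (1 - P)) * (D * P)
        = P * D * j * P + P * j * D * P - (P * D * P) * j * P - P * j * (P * D * P) := by
        noncomm_ring
    _ = P * D * j * P + P * j * D * P := by rw [hPDP]; noncomm_ring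

end Backlund

namespace Matrix

variable {n R : Type*} [Fintype n] [CommRing R] {P : Matrix n n R}

theorem trace_mul_mul_self_of_isIdempotentElem (hP : IsIdempotentElem P) (X : Matrix n n R) :
    (P * X * P).trace = (P * X).trace := by
  rw [trace_mul_cycle, hP.eq]

theorem trace_mul_mul_add_mul_mul_of_isIdempotentElem (hP : IsIdempotentElem P)
    {D : Matrix n n R} (hD : D * P + P * D = D) (j : Matrix n n R) :
    (P * D * j * P + P * j * D * P).trace = (j * D).trace := by
  calc (P * D * j * P + P * j * D * P).trace
      = (P * (D * j) * P).trace + (P * (j * D) * P).trace := by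
        rw [trace_add, mul_assoc P D, mul_assoc P j]
    _ = (j * (P * D)).trace + (j * (D * P)).trace := by
        rw [trace_mul_mul_self_of_isIdempotentElem hP, trace_mul_mul_self_of_isIdempotentElem hP,
          ← mul_assoc P D j, trace_mul_comm (P * D) j, trace_mul_comm P (j * D), mul_assoc j D P]
    _ = (j * D).trace := by rw [← trace_add, ← mul_add, add_comm, hD]

end Matrix

theorem backlund_trace_identities_general {N : ℕ}
    (R Rt jt B C : Matrix (Fin N) (Fin N) ℂ)
    (hRherm : Rᴴ = R) (hRproj : R * R = R)
    (hRtherm : Rtᴴ = Rt)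
    (hRtLeib : Rt * R + R * Rt = Rt)
    (hjt : jtᴴ = -jt)
    (hback1 : R * (Rt - jt * (1 - R)) = B)
    (hback2 : R * Rt = C) :
    (Rt * Rt * R).trace = (C * Cᴴ).trace ∧
    (jt * Rt).trace = (C * Bᴴ - B * Cᴴ).trace ∧
    (R * jt * Rt).trace = ((C - B) * Cᴴ).trace := by
  have hRidem : IsIdempotentElem R := hRproj
  have hR : IsSelfAdjoint R := hRherm
  have hRt : IsSelfAdjoint Rt := hRtherm
  have hRRtR : R * Rt * R = 0 := hRidem.mul_mul_eq_zero_of_mul_add_mul_eq hRtLeib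
  refine ⟨?_, ?_, ?_⟩
  · rw [← hback2, conjTranspose_mul, hRherm, hRtherm, ← mul_assoc, mul_assoc R Rt Rt,
      trace_mul_mul_self_of_isIdempotentElem hRidem, trace_mul_comm]
  · rw [← star_eq_conjTranspose, ← star_eq_conjTranspose,
      mul_star_sub_mul_star_eq_of_backlund hR hRt hjt hRRtR hback1 hback2,
      trace_mul_mul_add_mul_mul_of_isIdempotentElem hRidem hRtLeib]
  · rw [← star_eq_conjTranspose, sub_mul_star_eq_of_backlund hR hRt hRRtR hback1 hback2,
      mul_assoc R jt Rt, trace_mul_mul_self_of_isIdempotentElem hRidem]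

/-- the pointwise trace identities following from the Bäcklund relations
of Ward's chiral model. Here `R` is a hermitian projection, `Rt, Rx, Ry` its partial
derivatives (hermitian, satisfying the Leibniz consequence `R_a R + R R_a = R_a`),
and `jt, jx, jy` are anti-hermitian (`j_a = J⁻¹∂_a J` for unitary `J`). -/
theorem backlund_trace_identities {N : ℕ} (hN : 1 ≤ N) (μ : ℂ) (hμ : μ.im ≠ 0)
    (R Rt Rx Ry jt jx jy B C : Matrix (Fin N) (Fin N) ℂ)
    (hRherm : Rᴴ = R) (hRproj : R * R = R)
    (hRtherm : Rtᴴ = Rt) (hRxherm : Rxᴴ = Rx) (hRyherm : Ryᴴ = Ry)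
    (hRtLeib : Rt * R + R * Rt = Rt) (hRxLeib : Rx * R + R * Rx = Rx)
    (hRyLeib : Ry * R + R * Ry = Ry)
    (hjt : jtᴴ = -jt) (hjx : jxᴴ = -jx) (hjy : jyᴴ = -jy)
    (hB : B = (μ • Rx - Ry + R * jy) * (1 - R))
    (hC : C = μ⁻¹ • ((μ • Ry + Rx - R * jx) * (1 - R)))
    (hback1 : R * (Rt - jt * (1 - R)) = B)
    (hback2 : R * Rt = C) :
    (Rt * Rt * R).trace = (C * Cᴴ).trace ∧
    (jt * Rt).trace = (C * Bᴴ - B * Cᴴ).trace ∧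
    (R * jt * Rt).trace = ((C - B) * Cᴴ).trace :=
  backlund_trace_identities_general R Rt jt B C hRherm hRproj hRtherm hRtLeib hjt hback1 hback2
end

section
/- Let μ ∈ ℂ with Im μ ≠ 0 and set κ = 1 − μ/μ̄. Let J : ℝ³ → U(N) and R : ℝ³ → M_N(ℂ) be differentiable maps with R(p)* = R(p) and R(p)² = R(p) for all p, set M = i(1 − κR) and Ĵ = JM. Then pointwise on ℝ³ the energy densities of Ĵ and J satisfy ℰ̂ − ℰ = Σ_{a ∈ {t,x,y}} Tr( κκ̄ R_a R_a R + κ(1 − κ̄ R) J⁻¹J_a R_a ), where R_a = ∂_a R and J_a = ∂_a J. -/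
open MeasureTheory Matrix Complex

attribute [local instance] Matrix.frobeniusNormedAddCommGroup Matrix.frobeniusNormedSpace

/-- Partial derivative in the `i`-th coordinate direction of `ℝ³ ∋ (t,x,y)`
(`i = 0,1,2` for `t,x,y`). -/
noncomputable def pd {N : ℕ} (i : Fin 3) (f : (Fin 3 → ℝ) → Matrix (Fin N) (Fin N) ℂ)
    (p : Fin 3 → ℝ) : Matrix (Fin N) (Fin N) ℂ :=
  fderiv ℝ f p (Pi.single i 1)

/-- `J⁻¹ ∂ₐJ`. -/
noncomputable def lmc {N : ℕ} (a : Fin 3) (J : (Fin 3 → ℝ) → Matrix (Fin N) (Fin N) ℂ)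
    (p : Fin 3 → ℝ) : Matrix (Fin N) (Fin N) ℂ :=
  (J p)⁻¹ * pd a J p

/-- Energy density `ℰ = −(1/2)Tr((J⁻¹J_t)² + (J⁻¹J_x)² + (J⁻¹J_y)²)`. -/
noncomputable def energyDensity {N : ℕ} (J : (Fin 3 → ℝ) → Matrix (Fin N) (Fin N) ℂ)
    (p : Fin 3 → ℝ) : ℂ :=
  -(1 / 2 : ℂ) *
    (lmc 0 J p * lmc 0 J p + lmc 1 J p * lmc 1 J p + lmc 2 J p * lmc 2 J p).trace

/-! With `M = i(1 − κR)`, the gauge formula `Ĵ⁻¹Ĵₐ = M⁻¹(J⁻¹Jₐ)M + M⁻¹Mₐ` and cyclicity of the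
trace split `Tr((Ĵ⁻¹Ĵₐ)²)` into `Tr((J⁻¹Jₐ)²)`, a cross term and a term quadratic in `Rₐ`.
Since `|μ/μ̄| = 1`, `κ + κ̄ = κκ̄`, which makes `M⁻¹ = −i(1 − κ̄R)`. Differentiating `R² = R` gives
`RₐR + RRₐ = Rₐ`, hence `RRₐR = 0` and `Tr(Rₐ²) = 2 Tr(Rₐ²R)`, and these collapse the quadratic
term to `κκ̄ Tr(RₐRₐR)`. -/

theorem add_conj_eq_mul_conj_of_eq_one_sub_div_conj {μ κ : ℂ} (hμ : μ ≠ 0)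
    (hκ : κ = 1 - μ / starRingEnd ℂ μ) :
    κ + starRingEnd ℂ κ = κ * starRingEnd ℂ κ := by
  have hμ' : starRingEnd ℂ μ ≠ 0 := (map_ne_zero _).mpr hμ
  subst hκ
  simp only [map_sub, map_one, map_div₀, Complex.conj_conj]
  field_simp
  ring

section Idempotent

variable {A : Type*} [Ring A] {P S : A}

theorem IsIdempotentElem.mul_mul_eq_zero_of_mul_add_mul_eq_s3 (hP : IsIdempotentElem P)
    (hS : S * P + P * S = S) : P * S * P = 0 := by
  have h := congrArg (P * ·) hS
  simp only [mul_add, ← mul_assoc, hP.eq] at h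
  exact add_eq_right.mp h

theorem IsIdempotentElem.one_sub_smul_mul_one_sub_smul {𝕜 : Type*} [CommRing 𝕜]
    [Algebra 𝕜 A] (hP : IsIdempotentElem P) {κ κ' : 𝕜} (hκ : κ + κ' = κ * κ') :
    (1 - κ • P) * (1 - κ' • P) = 1 := by
  have : (1 - κ • P) * (1 - κ' • P) = 1 + (κ * κ' - κ - κ') • P := by
    simp only [sub_mul, mul_sub, one_mul, mul_one, smul_mul_smul_comm, hP.eq]
    module
  rw [this, show κ * κ' - κ - κ' = 0 by linear_combination -hκ, zero_smul, add_zero]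

end Idempotent

section Trace

variable {n R : Type*} [Fintype n] [DecidableEq n] [CommRing R]

theorem Matrix.trace_conj_add_mul_self {X Y L Ω : Matrix n n R} (hXY : X * Y = 1) :
    ((Y * L * X + Ω) * (Y * L * X + Ω)).trace
      = (L * L).trace + 2 * (X * Ω * Y * L).trace + (Ω * Ω).trace := by
  have hLL : (Y * L * X * (Y * L * X)).trace = (L * L).trace := by
    rw [show Y * L * X * (Y * L * X) = Y * (L * L * X) by
        simp only [mul_assoc, ← mul_assoc X Y, hXY, one_mul],
      trace_mul_comm, mul_assoc, hXY, mul_one]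
  have hcross : (Ω * (Y * L * X)).trace = (X * Ω * Y * L).trace := by
    rw [← mul_assoc, ← mul_assoc, trace_mul_comm]
    simp only [← mul_assoc]
  simp only [add_mul, mul_add, trace_add, hLL, trace_mul_comm (Y * L * X) Ω, hcross]
  ring

variable {P S : Matrix n n R}

theorem Matrix.trace_mul_self_of_mul_add_mul_eq (hS : S * P + P * S = S) :
    (S * S).trace = 2 * (S * S * P).trace := by
  have h : (S * S).trace = ((S * P + P * S) * S).trace := by rw [hS]
  rw [h, add_mul, trace_add, mul_assoc, trace_mul_comm S, mul_assoc P, trace_mul_comm P]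
  ring

theorem IsIdempotentElem.trace_one_sub_smul_mul_sq (hP : IsIdempotentElem P)
    (hS : S * P + P * S = S) (κ' : R) :
    ((1 - κ' • P) * S * ((1 - κ' • P) * S)).trace = 2 * (1 - κ') * (S * S * P).trace := by
  have hPSP := hP.mul_mul_eq_zero_of_mul_add_mul_eq_s3 hS
  have hPSPS : P * S * (P * S) = 0 := by rw [← mul_assoc, hPSP, zero_mul]
  have hSPS : (S * (P * S)).trace = (S * S * P).trace := by
    rw [trace_mul_comm, mul_assoc, trace_mul_comm, mul_assoc]
  have hPSS : (P * S * S).trace = (S * S * P).trace := by rw [mul_assoc, trace_mul_comm]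
  simp only [sub_mul, mul_sub, one_mul, smul_mul_assoc, mul_smul_comm, hPSPS, smul_zero,
    sub_zero, trace_sub, trace_smul, smul_eq_mul, hSPS, hPSS, trace_mul_self_of_mul_add_mul_eq hS]
  ring

theorem IsIdempotentElem.trace_conj_sub_smul_mul_self (hP : IsIdempotentElem P)
    (hS : S * P + P * S = S) {κ κ' : R} (hκ : κ + κ' = κ * κ') (L : Matrix n n R) :
    (((1 - κ' • P) * L * (1 - κ • P) - κ • ((1 - κ' • P) * S))
        * ((1 - κ' • P) * L * (1 - κ • P) - κ • ((1 - κ' • P) * S))).trace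
      = (L * L).trace
        - 2 * ((κ * κ') • (S * S * P) + κ • ((1 - κ' • P) * L * S)).trace := by
  have hAB := hP.one_sub_smul_mul_one_sub_smul hκ
  have hcross : ((1 - κ • P) * (-κ • ((1 - κ' • P) * S)) * (1 - κ' • P) * L).trace
      = -κ * ((1 - κ' • P) * L * S).trace := by
    rw [mul_smul_comm, smul_mul_assoc, smul_mul_assoc, trace_smul, smul_eq_mul, ← mul_assoc, hAB,
      one_mul, mul_assoc, trace_mul_comm, mul_assoc]
  rw [sub_eq_add_neg, ← neg_smul, trace_conj_add_mul_self hAB, hcross, smul_mul_smul_comm,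
    trace_smul, hP.trace_one_sub_smul_mul_sq hS, trace_add, trace_smul, trace_smul]
  simp only [smul_eq_mul]
  linear_combination (2 * κ * (S * S * P).trace) * hκ

end Trace

section Derivatives

-- The Frobenius norm instances on matrices agree with the ambient ones only up to unfolding,
-- hence the `erw`s below.
attribute [local instance] Matrix.frobeniusNormedRing Matrix.frobeniusNormedAlgebra

variable {N : ℕ} {a : Fin 3} {p : Fin 3 → ℝ}

theorem pd_mul {f g : (Fin 3 → ℝ) → Matrix (Fin N) (Fin N) ℂ}
    (hf : DifferentiableAt ℝ f p) (hg : DifferentiableAt ℝ g p) :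
    pd a (fun q => f q * g q) p = pd a f p * g p + f p * pd a g p := by
  unfold pd
  erw [fderiv_fun_mul' hf hg]
  exact add_comm _ _

theorem pd_smul_one_sub_smul (c κ : ℂ) {R : (Fin 3 → ℝ) → Matrix (Fin N) (Fin N) ℂ}
    (hR : DifferentiableAt ℝ R p) :
    pd a (fun q => c • (1 - κ • R q)) p = -(c * κ) • pd a R p := by
  unfold pd
  have h1 : DifferentiableAt ℝ (fun q => (1 : Matrix (Fin N) (Fin N) ℂ) - κ • R q) p :=
    (differentiableAt_const _).sub (hR.const_smul κ)
  erw [fderiv_fun_const_smul h1 c, fderiv_const_sub, fderiv_fun_const_smul hR κ]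
  change c • -(κ • fderiv ℝ R p (Pi.single a 1)) = _
  rw [smul_neg, smul_smul, neg_smul]

theorem pd_mul_add_mul_pd_of_isIdempotentElem {R : (Fin 3 → ℝ) → Matrix (Fin N) (Fin N) ℂ}
    (hR : DifferentiableAt ℝ R p) (hproj : ∀ q, IsIdempotentElem (R q)) :
    pd a R p * R p + R p * pd a R p = pd a R p := by
  rw [← pd_mul hR hR]
  simp only [(hproj _).eq]

theorem lmc_mul {J M : (Fin 3 → ℝ) → Matrix (Fin N) (Fin N) ℂ}
    (hJ : DifferentiableAt ℝ J p) (hM : DifferentiableAt ℝ M p) (hJinv : IsUnit (J p).det) :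
    lmc a (fun q => J q * M q) p = (M p)⁻¹ * lmc a J p * M p + lmc a M p := by
  simp only [lmc, pd_mul hJ hM, Matrix.mul_inv_rev, mul_add, mul_assoc,
    nonsing_inv_mul_cancel_left _ _ hJinv]

end Derivatives

theorem energyDensity_eq_sum {N : ℕ} (J : (Fin 3 → ℝ) → Matrix (Fin N) (Fin N) ℂ)
    (p : Fin 3 → ℝ) :
    energyDensity J p = -(1 / 2 : ℂ) * ∑ a : Fin 3, (lmc a J p * lmc a J p).trace := by
  rw [energyDensity, Fin.sum_univ_three, trace_add, trace_add]

section Gauge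

variable {N : ℕ} {P : Matrix (Fin N) (Fin N) ℂ} {κ κ' : ℂ}

theorem IsIdempotentElem.inv_I_smul_one_sub_smul (hP : IsIdempotentElem P)
    (hκ : κ + κ' = κ * κ') :
    (I • (1 - κ • P))⁻¹ = -I • (1 - κ' • P) := by
  refine inv_eq_right_inv ?_
  rw [smul_mul_smul_comm, hP.one_sub_smul_mul_one_sub_smul hκ, mul_neg, I_mul_I, neg_neg, one_smul]

variable {R : (Fin 3 → ℝ) → Matrix (Fin N) (Fin N) ℂ} {a : Fin 3} {p : Fin 3 → ℝ}

theorem lmc_I_smul_one_sub_smul (hR : DifferentiableAt ℝ R p) (hP : IsIdempotentElem (R p))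
    (hκ : κ + κ' = κ * κ') :
    lmc a (fun q => I • (1 - κ • R q)) p = -κ • ((1 - κ' • R p) * pd a R p) := by
  rw [lmc, hP.inv_I_smul_one_sub_smul hκ, pd_smul_one_sub_smul I κ hR, smul_mul_smul_comm,
    neg_mul_neg, ← mul_assoc, I_mul_I, neg_one_mul]

theorem lmc_mul_I_smul_one_sub_smul {J : (Fin 3 → ℝ) → Matrix (Fin N) (Fin N) ℂ}
    (hJ : DifferentiableAt ℝ J p) (hR : DifferentiableAt ℝ R p)
    (hJinv : IsUnit (J p).det) (hP : IsIdempotentElem (R p)) (hκ : κ + κ' = κ * κ') :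
    lmc a (fun q => J q * (I • (1 - κ • R q))) p
      = (1 - κ' • R p) * lmc a J p * (1 - κ • R p)
        - κ • ((1 - κ' • R p) * pd a R p) := by
  have hM : DifferentiableAt ℝ (fun q => I • (1 - κ • R q)) p :=
    ((differentiableAt_const _).sub (hR.const_smul κ)).const_smul I
  rw [lmc_mul hJ hM hJinv, lmc_I_smul_one_sub_smul hR hP hκ, hP.inv_I_smul_one_sub_smul hκ,
    smul_mul_assoc, smul_mul_assoc, mul_smul_comm, smul_smul, neg_mul, I_mul_I, neg_neg, one_smul,
    neg_smul, ← sub_eq_add_neg]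

end Gauge

theorem energy_density_difference_general {N : ℕ}
    (μ : ℂ) (hμ : μ.im ≠ 0) (κ : ℂ) (hκ : κ = 1 - μ / starRingEnd ℂ μ)
    (J R : (Fin 3 → ℝ) → Matrix (Fin N) (Fin N) ℂ)
    (hJdiff : Differentiable ℝ J) (hRdiff : Differentiable ℝ R)
    (hJunitary : ∀ p, J p ∈ Matrix.unitaryGroup (Fin N) ℂ)
    (hRproj : ∀ p, R p * R p = R p)
    (Jhat : (Fin 3 → ℝ) → Matrix (Fin N) (Fin N) ℂ)
    (hJhat : Jhat = fun p => J p * (Complex.I • ((1 : Matrix (Fin N) (Fin N) ℂ) - κ • R p))) :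
    ∀ p, energyDensity Jhat p - energyDensity J p =
      ∑ a : Fin 3,
        ((κ * starRingEnd ℂ κ) • (pd a R p * pd a R p * R p)
          + κ • (((1 : Matrix (Fin N) (Fin N) ℂ) - starRingEnd ℂ κ • R p)
              * lmc a J p * pd a R p)).trace := by
  intro p
  have hk := add_conj_eq_mul_conj_of_eq_one_sub_div_conj (fun h => hμ (by simp [h])) hκ
  have hP : IsIdempotentElem (R p) := hRproj p
  have hS (a : Fin 3) : pd a R p * R p + R p * pd a R p = pd a R p :=
    pd_mul_add_mul_pd_of_isIdempotentElem (hRdiff p) hRproj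
  have hlmc (a : Fin 3) : lmc a Jhat p
      = (1 - starRingEnd ℂ κ • R p) * lmc a J p * (1 - κ • R p)
        - κ • ((1 - starRingEnd ℂ κ • R p) * pd a R p) :=
    hJhat ▸ lmc_mul_I_smul_one_sub_smul (hJdiff p) (hRdiff p)
      (UnitaryGroup.det_isUnit ⟨J p, hJunitary p⟩) hP hk
  simp only [energyDensity_eq_sum, hlmc, hP.trace_conj_sub_smul_mul_self (hS _) hk,
    Finset.sum_sub_distrib, ← Finset.mul_sum]
  ring

/-- for unitary `J`, hermitian projection valued `R`, `κ = 1 − μ/μ̄` and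
`Ĵ = J · i(1 − κR)`, the difference of energy densities is
`ℰ̂ − ℰ = Σ_a Tr(κκ̄ R_aR_aR + κ(1 − κ̄R)J⁻¹J_aR_a)`. -/
theorem energy_density_difference {N : ℕ}
    (μ : ℂ) (hμ : μ.im ≠ 0) (κ : ℂ) (hκ : κ = 1 - μ / starRingEnd ℂ μ)
    (J R : (Fin 3 → ℝ) → Matrix (Fin N) (Fin N) ℂ)
    (hJdiff : Differentiable ℝ J) (hRdiff : Differentiable ℝ R)
    (hJunitary : ∀ p, J p ∈ Matrix.unitaryGroup (Fin N) ℂ)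
    (hRherm : ∀ p, (R p)ᴴ = R p) (hRproj : ∀ p, R p * R p = R p)
    (Jhat : (Fin 3 → ℝ) → Matrix (Fin N) (Fin N) ℂ)
    (hJhat : Jhat = fun p => J p * (Complex.I • ((1 : Matrix (Fin N) (Fin N) ℂ) - κ • R p))) :
    ∀ p, energyDensity Jhat p - energyDensity J p =
      ∑ a : Fin 3,
        ((κ * starRingEnd ℂ κ) • (pd a R p * pd a R p * R p)
          + κ • (((1 : Matrix (Fin N) (Fin N) ℂ) - starRingEnd ℂ κ • R p)
              * lmc a J p * pd a R p)).trace :=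
  energy_density_difference_general μ hμ κ hκ J R hJdiff hRdiff hJunitary hRproj Jhat hJhat
end

section
/- Let f : ℂ → ℂ be holomorphic (as a function of z = x + iy) on an open set U ⊆ ℝ², with q = (1, f) and R = q* ⊗ q / (1 + |f|²) the 2×2 hermitian projection with entries R_{jk} = q̄_j q_k/(1+|f|²). Let J = M₁ = i(1 − 2R) be the corresponding static 1-uniton with μ = i. Then J is unitary, independent of t, and its energy density satisfies pointwise on U: ℰ₁ = −(1/2)Tr((J⁻¹J_x)² + (J⁻¹J_y)²) = 8|f′|²/(1 + |f|²)². -/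
open Matrix Complex

attribute [local instance] Matrix.frobeniusNormedAddCommGroup Matrix.frobeniusNormedSpace

/-!
`J = i(1 − 2P)` with `P = R(x + iy)` a family of hermitian projections, so `J` is unitary with
`J⁻¹ = −J`. Differentiating `P² = P` gives `P_a P + P P_a = P_a`, hence `P P_a P = 0`, and these
two identities turn `−½ Tr (J⁻¹J_a)²` into `2 Tr P_a²`. For the rank-one projection
`R(u) = q* ⊗ q/(1 + |u|²)`, `q = (1, u)`, the quantity `Tr (dR(u)[a])² = 2|a|²/(1 + |u|²)²` is the
Fubini–Study metric; by the chain rule `P_x = dR(f)[f′]` and `P_y = dR(f)[i f′]`, which adds up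
to `8|f′|²/(1 + |f|²)²`.
-/

open ComplexConjugate

section UnitonFactor

variable {A : Type*} [Ring A] [Algebra ℂ A]

lemma IsIdempotentElem.one_sub_two_smul_mul_self {P : A} (hP : IsIdempotentElem P) :
    (1 - (2 : ℂ) • P) * (1 - (2 : ℂ) • P) = 1 := by
  simp only [sub_mul, mul_sub, one_mul, mul_one, smul_mul_smul, hP.eq]
  module

def unitonFactor (P : A) : A := I • (1 - (2 : ℂ) • P)

variable [StarRing A] [StarModule ℂ A]

lemma star_unitonFactor {P : A} (hP : IsSelfAdjoint P) :
    star (unitonFactor P) = -unitonFactor P := by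
  simp [unitonFactor, star_smul, hP.star_eq, neg_smul]

lemma IsStarProjection.star_unitonFactor_mul_self {P : A} (hP : IsStarProjection P) :
    star (unitonFactor P) * unitonFactor P = 1 := by
  rw [star_unitonFactor hP.isSelfAdjoint, unitonFactor, neg_mul, smul_mul_smul,
    hP.isIdempotentElem.one_sub_two_smul_mul_self, I_mul_I, neg_smul, one_smul, neg_neg]

end UnitonFactor

lemma Matrix.trace_sq_one_sub_two_smul_mul {n R : Type*} [Fintype n] [DecidableEq n] [CommRing R]
    {P D : Matrix n n R} (hP : IsIdempotentElem P) (hD : D * P + P * D = D) :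
    trace ((1 - (2 : R) • P) * D * ((1 - (2 : R) • P) * D)) = -trace (D * D) := by
  have hPDP : P * D * P = 0 := by
    have := congrArg (P * ·) hD
    simp only [mul_add, ← mul_assoc, hP.eq] at this
    simpa using this
  have hcomm : (1 - (2 : R) • P) * D = D * P - P * D := by
    rw [sub_mul, one_mul, smul_mul_assoc, two_smul]
    nth_rw 1 [← hD]
    abel
  rw [hcomm]
  calc trace ((D * P - P * D) * (D * P - P * D))
      = trace (D * (P * D * P)) - trace (D * P * P * D) - trace (P * D * D * P)
          + trace (P * D * P * D) := by
        simp only [sub_mul, mul_sub, trace_sub, mul_assoc]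
        ring
    _ = -(trace (D * P * D) + trace (P * D * D)) := by
        rw [hPDP, mul_assoc D P P, hP.eq, trace_mul_comm (P * D * D) P, ← mul_assoc, ← mul_assoc,
          hP.eq]
        simp only [mul_zero, zero_mul, trace_zero, zero_sub, add_zero]
        ring
    _ = -trace (D * D) := by
        rw [← trace_add, ← add_mul, hD]

lemma fderiv_mul_add_mul_fderiv_of_isIdempotentElem {E A : Type*} [NormedAddCommGroup E]
    [NormedSpace ℝ E] [NormedRing A] [NormedAlgebra ℝ A] {P : E → A} {p : E}
    (hP : ∀ q, IsIdempotentElem (P q)) (hPd : DifferentiableAt ℝ P p) (v : E) :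
    fderiv ℝ P p v * P p + P p * fderiv ℝ P p v = fderiv ℝ P p v := by
  have hsq : (fun q => P q * P q) = P := funext fun q => (hP q).eq
  have := congrArg (fun L : E →L[ℝ] A => L v) (fderiv_fun_mul' hPd hPd)
  simp only [hsq] at this
  simpa [add_comm] using this.symm

namespace Matrix

variable {m n : Type*} [Fintype m] [Fintype n] [DecidableEq m] [DecidableEq n]

lemma eq_sum_smul_single (M : Matrix m n ℂ) : M = ∑ i, ∑ j, M i j • single i j (1 : ℂ) := by
  simp_rw [smul_single, smul_eq_mul, mul_one]
  exact matrix_eq_sum_single M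

lemma differentiableAt_of_entries {E : Type*} [NormedAddCommGroup E] [NormedSpace ℝ E]
    {M : E → Matrix m n ℂ} {x : E} (h : ∀ i j, DifferentiableAt ℝ (fun y => M y i j) x) :
    DifferentiableAt ℝ M x := by
  rw [funext fun y => eq_sum_smul_single (M y)]
  fun_prop

lemma hasDerivAt_of_entries {M : ℝ → Matrix m n ℂ} {M' : Matrix m n ℂ} {t : ℝ}
    (h : ∀ i j, HasDerivAt (fun s => M s i j) (M' i j) t) : HasDerivAt M M' t := by
  rw [funext fun s => eq_sum_smul_single (M s), eq_sum_smul_single M']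
  exact HasDerivAt.fun_sum fun i _ => HasDerivAt.fun_sum fun j _ => (h i j).smul_const _

end Matrix

section LineProjection

noncomputable def lineProjection (u : ℂ) : Matrix (Fin 2) (Fin 2) ℂ :=
  ((1 + normSq u : ℝ) : ℂ)⁻¹ • !![1, u; conj u, conj u * u]

lemma ofReal_one_add_normSq (u : ℂ) : ((1 + normSq u : ℝ) : ℂ) = 1 + conj u * u := by
  rw [mul_comm, mul_conj]
  push_cast
  rfl

lemma one_add_conj_mul_self_ne_zero (u : ℂ) : 1 + conj u * u ≠ 0 := by
  rw [← ofReal_one_add_normSq]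
  exact_mod_cast (add_pos_of_pos_of_nonneg one_pos (normSq_nonneg u)).ne'

lemma isStarProjection_lineProjection (u : ℂ) : IsStarProjection (lineProjection u) := by
  have hsq : !![1, u; conj u, conj u * u] * !![1, u; conj u, conj u * u] =
      (1 + conj u * u) • !![1, u; conj u, conj u * u] := by
    ext i j
    fin_cases i <;> fin_cases j <;> simp <;> ring
  refine ⟨?_, ?_⟩
  · rw [IsIdempotentElem, lineProjection, smul_mul_smul, hsq, smul_smul, ofReal_one_add_normSq]
    congr 1
    field_simp [one_add_conj_mul_self_ne_zero u]
  · rw [IsSelfAdjoint, lineProjection, star_eq_conjTranspose, conjTranspose_smul,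
      ofReal_one_add_normSq]
    ext i j
    fin_cases i <;> fin_cases j <;> simp [mul_comm]

lemma differentiable_lineProjection : Differentiable ℝ lineProjection := fun u => by
  refine Matrix.differentiableAt_of_entries fun i j => ?_
  have := one_add_conj_mul_self_ne_zero u
  simp only [lineProjection, ofReal_one_add_normSq]
  fin_cases i <;> fin_cases j <;>
    simp only [Fin.zero_eta, Fin.mk_one, Fin.isValue, Matrix.smul_apply, of_apply, cons_val',
      cons_val_zero, cons_val_one, cons_val_fin_one, smul_eq_mul, mul_one] <;>
    fun_prop (disch := assumption)

lemma fderiv_lineProjection_apply (u a : ℂ) :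
    fderiv ℝ lineProjection u a =
      (1 + conj u * u)⁻¹ • !![0, a; conj a, conj a * u + conj u * a]
        - ((conj a * u + conj u * a) / (1 + conj u * u) ^ 2) • !![1, u; conj u, conj u * u] := by
  refine ((differentiable_lineProjection u).hasFDerivAt.hasLineDerivAt a).unique ?_
  have hγ : HasDerivAt (fun t : ℝ => u + t • a) a 0 := by
    simpa using ((hasDerivAt_id (0 : ℝ)).smul_const a).const_add u
  have hγc : HasDerivAt (fun t : ℝ => conj (u + t • a)) (conj a) 0 := by
    simpa using hγ.star
  have hden : HasDerivAt (fun t : ℝ => 1 + conj (u + t • a) * (u + t • a))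
      (conj a * u + conj u * a) 0 := by
    simpa using (hγc.fun_mul hγ).const_add 1
  have hM : HasDerivAt
      (fun t : ℝ => !![1, u + t • a; conj (u + t • a), conj (u + t • a) * (u + t • a)])
      !![0, a; conj a, conj a * u + conj u * a] 0 := by
    refine Matrix.hasDerivAt_of_entries fun i j => ?_
    fin_cases i <;> fin_cases j
    · simpa using hasDerivAt_const (0 : ℝ) (1 : ℂ)
    · simpa using hγ
    · simpa using hγc
    · simpa using hγc.fun_mul hγ
  have := (hden.inv (by simpa using one_add_conj_mul_self_ne_zero u)).smul hM
  unfold HasLineDerivAt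
  simp only [lineProjection, ofReal_one_add_normSq]
  convert this using 1
  · rfl
  · simp only [Pi.inv_apply, zero_smul, add_zero, sub_eq_add_neg, ← neg_smul, neg_div]

lemma trace_fderiv_lineProjection_mul_self (u a : ℂ) :
    trace (fderiv ℝ lineProjection u a * fderiv ℝ lineProjection u a) =
      ((2 * ‖a‖ ^ 2 / (1 + ‖u‖ ^ 2) ^ 2 : ℝ) : ℂ) := by
  have hn := one_add_conj_mul_self_ne_zero u
  rw [fderiv_lineProjection_apply]
  push_cast
  rw [← conj_mul', ← conj_mul']
  generalize conj u = v at hn ⊢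
  generalize conj a = b
  simp only [trace_fin_two, mul_apply, Fin.sum_univ_two, Matrix.sub_apply, Matrix.smul_apply,
    of_apply, cons_val', cons_val_zero, cons_val_one, cons_val_fin_one, smul_eq_mul]
  field_simp
  ring

end LineProjection

noncomputable def complexCoord : (Fin 3 → ℝ) →L[ℝ] ℂ :=
  ofRealCLM.comp (ContinuousLinearMap.proj 1) + (ContinuousLinearMap.proj 2).smulRight I

lemma complexCoord_apply (p : Fin 3 → ℝ) : complexCoord p = p 1 + p 2 * I := by
  simp [complexCoord, real_smul]

lemma complexCoord_single_zero : complexCoord (Pi.single 0 1) = 0 := by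
  simp [complexCoord_apply]

lemma complexCoord_single_one : complexCoord (Pi.single 1 1) = 1 := by
  simp [complexCoord_apply]

lemma complexCoord_single_two : complexCoord (Pi.single 2 1) = I := by
  simp [complexCoord_apply]

lemma pd_comp_complexCoord {N : ℕ} {F : ℂ → Matrix (Fin N) (Fin N) ℂ} {h : ℂ → ℂ}
    {p : Fin 3 → ℝ} (hF : DifferentiableAt ℝ F (h (complexCoord p)))
    (hh : DifferentiableAt ℂ h (complexCoord p)) (a : Fin 3) :
    pd a (fun q => F (h (complexCoord q))) p =
      fderiv ℝ F (h (complexCoord p))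
        (deriv h (complexCoord p) * complexCoord (Pi.single a 1)) := by
  have hh' : HasFDerivAt (fun q => h (complexCoord q))
      ((((1 : ℂ →L[ℂ] ℂ).smulRight (deriv h (complexCoord p))).restrictScalars ℝ).comp
        complexCoord) p :=
    (hh.hasDerivAt.hasFDerivAt.restrictScalars ℝ).comp p complexCoord.hasFDerivAt
  have hFh : HasFDerivAt (fun q => F (h (complexCoord q)))
      ((fderiv ℝ F (h (complexCoord p))).comp
        ((((1 : ℂ →L[ℂ] ℂ).smulRight (deriv h (complexCoord p))).restrictScalars ℝ).comp
          complexCoord)) p :=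
    hF.hasFDerivAt.comp p hh'
  rw [pd, hFh.fderiv]
  simp [mul_comm]

section UnitonEnergy

variable {N : ℕ} {P : (Fin 3 → ℝ) → Matrix (Fin N) (Fin N) ℂ} {p : Fin 3 → ℝ}

lemma pd_unitonFactor (hP : DifferentiableAt ℝ P p) (a : Fin 3) :
    pd a (fun q => unitonFactor (P q)) p = (-(2 * I)) • pd a P p := by
  have hJ : HasFDerivAt (fun q => unitonFactor (P q)) (I • -((2 : ℂ) • fderiv ℝ P p)) p :=
    ((hP.hasFDerivAt.const_smul (2 : ℂ)).const_sub 1).const_smul I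
  rw [pd, pd, hJ.fderiv]
  simp [smul_smul, mul_comm]

lemma lmc_unitonFactor (hP : ∀ q, IsStarProjection (P q)) (hPd : DifferentiableAt ℝ P p)
    (a : Fin 3) :
    lmc a (fun q => unitonFactor (P q)) p = (-2 : ℂ) • ((1 - (2 : ℂ) • P p) * pd a P p) := by
  have hinv : (unitonFactor (P p))⁻¹ = -unitonFactor (P p) := by
    rw [Matrix.inv_eq_left_inv (hP p).star_unitonFactor_mul_self,
      star_unitonFactor (hP p).isSelfAdjoint]
  rw [lmc, hinv, pd_unitonFactor hPd, unitonFactor, neg_mul, smul_mul_smul, ← neg_smul]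
  congr 1
  linear_combination (2 : ℂ) * I_sq

attribute [local instance] Matrix.frobeniusNormedRing Matrix.frobeniusNormedAlgebra in
lemma trace_lmc_unitonFactor_mul_self (hP : ∀ q, IsStarProjection (P q))
    (hPd : DifferentiableAt ℝ P p) (a : Fin 3) :
    trace (lmc a (fun q => unitonFactor (P q)) p * lmc a (fun q => unitonFactor (P q)) p) =
      -4 * trace (pd a P p * pd a P p) := by
  have hD : pd a P p * P p + P p * pd a P p = pd a P p :=
    fderiv_mul_add_mul_fderiv_of_isIdempotentElem (fun q => (hP q).isIdempotentElem) hPd _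
  rw [lmc_unitonFactor hP hPd, smul_mul_smul, trace_smul,
    Matrix.trace_sq_one_sub_two_smul_mul (hP p).isIdempotentElem hD, smul_eq_mul]
  ring

end UnitonEnergy

/-- the static `1`-uniton `J = i(1 − 2R)` with `μ = i`, built from the
hermitian projection `R = q*⊗q/(1+|f|²)`, `q = (1, f)`, `f` holomorphic in
`z = x + iy` on an open set `U`, is unitary, time independent, and has energy density
`ℰ₁ = −(1/2)Tr((J⁻¹J_x)² + (J⁻¹J_y)²) = 8|f′|²/(1+|f|²)²` on `U`. -/
theorem one_uniton_energy_density
    (U : Set ℂ) (hU : IsOpen U) (f : ℂ → ℂ) (hf : DifferentiableOn ℂ f U)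
    (R : ℂ → Matrix (Fin 2) (Fin 2) ℂ)
    (hR : R = fun z => (((1 + Complex.normSq (f z) : ℝ)) : ℂ)⁻¹ •
      !![1, f z; starRingEnd ℂ (f z), starRingEnd ℂ (f z) * f z])
    (J : (Fin 3 → ℝ) → Matrix (Fin 2) (Fin 2) ℂ)
    (hJ : J = fun p => Complex.I •
      ((1 : Matrix (Fin 2) (Fin 2) ℂ) - (2 : ℂ) • R (p 1 + p 2 * Complex.I))) :
    ∀ p : Fin 3 → ℝ, (p 1 + p 2 * Complex.I) ∈ U →
      ((J p)ᴴ * J p = 1) ∧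
      (pd 0 J p = 0) ∧
      (-(1 / 2 : ℂ) * (lmc 1 J p * lmc 1 J p + lmc 2 J p * lmc 2 J p).trace =
        ((8 * ‖deriv f (p 1 + p 2 * Complex.I)‖ ^ 2
          / (1 + ‖f (p 1 + p 2 * Complex.I)‖ ^ 2) ^ 2 : ℝ) : ℂ)) := by
  intro p hz
  set P : (Fin 3 → ℝ) → Matrix (Fin 2) (Fin 2) ℂ := fun q => lineProjection (f (complexCoord q))
  have hJP : J = fun q => unitonFactor (P q) := by
    simp only [hJ, hR, P, complexCoord_apply, unitonFactor, lineProjection]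
  rw [← complexCoord_apply] at hz ⊢
  have hfz : DifferentiableAt ℂ f (complexCoord p) := hf.differentiableAt (hU.mem_nhds hz)
  have hPP : ∀ q, IsStarProjection (P q) := fun q => isStarProjection_lineProjection _
  have hPd : DifferentiableAt ℝ P p :=
    (differentiable_lineProjection _).comp p ((hfz.restrictScalars ℝ).comp p
      complexCoord.differentiableAt)
  have hpd := pd_comp_complexCoord (differentiable_lineProjection _) hfz
  subst hJP
  refine ⟨(hPP p).star_unitonFactor_mul_self, ?_, ?_⟩
  · rw [pd_unitonFactor hPd, hpd, complexCoord_single_zero, mul_zero, map_zero, smul_zero]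
  · rw [trace_add, trace_lmc_unitonFactor_mul_self hPP hPd,
      trace_lmc_unitonFactor_mul_self hPP hPd, hpd, hpd, trace_fderiv_lineProjection_mul_self,
      trace_fderiv_lineProjection_mul_self, complexCoord_single_one, complexCoord_single_two,
      mul_one, norm_mul, norm_I, mul_one]
    push_cast
    ring
end
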